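/- Let K be a finite simplicial complex with a partition of its vertex set V(K) = U ⊔ W, and suppose there is a constant B such that for every face σ of the induced subcomplex K[U] (including the empty face) the total reduced rational Betti number of lk_W σ is at most B. Then β̃(K) ≤ B · |K[U]|, where |K[U]| is the number of faces of K[U] including the empty face. -/

import Mathlib

attribute [local instance] Classical.propDecidable

noncomputable section

open Finset Module
open scoped DirectSum

universe u

/-- An abstract simplicial complex on vertex type `V`, encoded by its set of faces
(finite subsets of `V`), required to be downward closed and to contain the empty face.
(The complex with only the empty face is the "empty complex", i.e. `S^{-1}`.) -/
structure SComplex (V : Type u) where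
  faces : Set (Finset V)
  empty_mem : ∅ ∈ faces
  down_closed : ∀ {s t : Finset V}, s ∈ faces → t ⊆ s → t ∈ faces

namespace SComplex

variable {V : Type u}

/-- Ordered `j`-simplices of `K`: tuples of `j` vertices (repetitions allowed) spanning a
face of `K`.  Chains on these compute the reduced homology of `K` (this is the augmented,
unnormalized chain complex of the simplicial set associated to `K`); the level `j`
corresponds to reduced degree `j - 1`. -/
def OSimplex (K : SComplex V) (j : ℕ) : Type u :=
  {t : Fin j → V // Finset.univ.image t ∈ K.faces}

/-- The `ℚ`-vector space of (level `j`, i.e. reduced degree `j-1`) simplicial chains. -/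
abbrev Chain (K : SComplex V) (j : ℕ) : Type u := OSimplex K j →₀ ℚ

/-- The basis chain corresponding to a single ordered simplex. -/
def ofSimplex (K : SComplex V) (j : ℕ) (s : OSimplex K j) : Chain K j :=
  Finsupp.single s 1

/-- Boundary of a single ordered simplex: the alternating sum of its facets. -/
def bdryO (K : SComplex V) (j : ℕ) (s : OSimplex K (j + 1)) : Chain K j :=
  ∑ i : Fin (j + 1), Finsupp.single
    ⟨s.1 ∘ i.succAbove, K.down_closed s.2 (by
      intro v hv
      simp only [Finset.mem_image] at hv ⊢
      obtain ⟨w, -, rfl⟩ := hv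
      exact ⟨i.succAbove w, Finset.mem_univ _, rfl⟩)⟩
    ((-1 : ℚ) ^ (i : ℕ))

/-- The simplicial boundary map (from level `j+1` to level `j`). -/
def bdry (K : SComplex V) (j : ℕ) : Chain K (j + 1) →ₗ[ℚ] Chain K j :=
  Finsupp.lsum ℚ fun s => LinearMap.toSpanSingleton ℚ (Chain K j) (bdryO K j s)

/-- Cycles at level `j` (reduced degree `j - 1`).  At level `0` (spanned by the empty
simplex) every chain is a cycle: this is the augmented complex. -/
def cyclesAt (K : SComplex V) : (j : ℕ) → Submodule ℚ (Chain K j)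
  | 0 => ⊤
  | j + 1 => LinearMap.ker (bdry K j)

/-- Boundaries at level `j`. -/
def boundariesAt (K : SComplex V) (j : ℕ) : Submodule ℚ (Chain K j) :=
  LinearMap.range (bdry K j)

/-- Reduced simplicial homology with rational coefficients:
`homologyAt K j` is the reduced homology group `H̃_{j-1}(K; ℚ)`
(so `homologyAt K 0 = H̃_{-1}`, `homologyAt K (i+1) = H̃_i`). -/
abbrev homologyAt (K : SComplex V) (j : ℕ) : Type u :=
  cyclesAt K j ⧸ ((boundariesAt K j).comap (cyclesAt K j).subtype)

/-- The homology class of a cycle. -/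
def hClass (K : SComplex V) (j : ℕ) (z : Chain K j) (hz : z ∈ cyclesAt K j) :
    homologyAt K j :=
  Submodule.Quotient.mk ⟨z, hz⟩

/-- The reduced Betti number `β̃_{j-1}(K) = dim_ℚ H̃_{j-1}(K; ℚ)`. -/
def bettiAt (K : SComplex V) (j : ℕ) : ℕ := finrank ℚ (homologyAt K j)

/-- The total reduced Betti number `β̃(K) = ∑_i β̃_i(K)` (including degree `-1`). -/
def totalBetti (K : SComplex V) : ℕ := finrank ℚ (⨁ j : ℕ, homologyAt K j)

/-- Simplicial cochains with rational coefficients. -/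
abbrev Cochain (K : SComplex V) (j : ℕ) : Type u := Chain K j →ₗ[ℚ] ℚ

/-- The simplicial coboundary map, the transpose of the boundary. -/
def cobdry (K : SComplex V) (j : ℕ) : Cochain K j →ₗ[ℚ] Cochain K (j + 1) :=
  (bdry K j).dualMap

/-- Cocycles at level `j` (reduced degree `j-1`). -/
def cocyclesAt (K : SComplex V) (j : ℕ) : Submodule ℚ (Cochain K j) :=
  LinearMap.ker (cobdry K j)

/-- Coboundaries at level `j`. -/
def cobordsAt (K : SComplex V) : (j : ℕ) → Submodule ℚ (Cochain K j)
  | 0 => ⊥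
  | j + 1 => LinearMap.range (cobdry K j)

/-- Reduced simplicial cohomology with rational coefficients:
`cohomologyAt K j` is `H̃^{j-1}(K; ℚ)`. -/
abbrev cohomologyAt (K : SComplex V) (j : ℕ) : Type u :=
  cocyclesAt K j ⧸ ((cobordsAt K j).comap (cocyclesAt K j).subtype)

/-- The cohomology class of a cocycle. -/
def hcClass (K : SComplex V) (j : ℕ) (γ : Cochain K j) (hγ : γ ∈ cocyclesAt K j) :
    cohomologyAt K j :=
  Submodule.Quotient.mk ⟨γ, hγ⟩

/-- Evaluation of a cocycle on homology classes. -/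
def pairingAux (K : SComplex V) (j : ℕ) (γ : cocyclesAt K j) :
    homologyAt K j →ₗ[ℚ] ℚ :=
  Submodule.liftQ _ ((γ : Cochain K j).comp (cyclesAt K j).subtype) (by
    rintro ⟨z, hz⟩ hmem
    simp only [Submodule.mem_comap, Submodule.subtype_apply] at hmem
    obtain ⟨x, hx⟩ := hmem
    simp only [LinearMap.mem_ker, LinearMap.comp_apply, Submodule.subtype_apply]
    have hker : cobdry K j (γ : Cochain K j) = 0 := γ.2
    have h2 : (cobdry K j (γ : Cochain K j)) x = 0 := by rw [hker]; rfl
    calc (γ : Cochain K j) z = (γ : Cochain K j) (bdry K j x) := by rw [hx]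
      _ = (cobdry K j (γ : Cochain K j)) x := rfl
      _ = 0 := h2)

/-- The evaluation pairing `⟨·,·⟩ : H̃^{j-1}(K;ℚ) ⊗ H̃_{j-1}(K;ℚ) → ℚ`
given by evaluating cochains on chains. -/
def pairing (K : SComplex V) (j : ℕ) :
    cohomologyAt K j →ₗ[ℚ] homologyAt K j →ₗ[ℚ] ℚ :=
  Submodule.liftQ _
    { toFun := fun γ => pairingAux K j γ
      map_add' := by
        intro γ δ
        apply LinearMap.ext
        intro x
        obtain ⟨⟨z, hz⟩, rfl⟩ := Submodule.Quotient.mk_surjective _ x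
        simp [pairingAux, Submodule.liftQ_apply]
      map_smul' := by
        intro c γ
        apply LinearMap.ext
        intro x
        obtain ⟨⟨z, hz⟩, rfl⟩ := Submodule.Quotient.mk_surjective _ x
        simp [pairingAux, Submodule.liftQ_apply] }
    (by
      rintro ⟨γ, hγ⟩ hmem
      simp only [Submodule.mem_comap, Submodule.subtype_apply] at hmem
      simp only [LinearMap.mem_ker]
      apply LinearMap.ext
      intro x
      obtain ⟨⟨z, hz⟩, rfl⟩ := Submodule.Quotient.mk_surjective _ x
      simp only [LinearMap.coe_mk, AddHom.coe_mk, LinearMap.zero_apply]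
      cases j with
      | zero =>
          have : γ = 0 := by simpa [cobordsAt] using hmem
          simp [pairingAux, Submodule.liftQ_apply, this]
      | succ j =>
          obtain ⟨η, hη⟩ := hmem
          have hz0 : bdry K j z = 0 := hz
          simp only [pairingAux, Submodule.liftQ_apply]
          calc γ.comp (cyclesAt K (j+1)).subtype ⟨z, hz⟩ = γ z := rfl
            _ = (cobdry K j η) z := by rw [hη]
            _ = η (bdry K j z) := rfl
            _ = 0 := by rw [hz0]; exact map_zero η)

end SComplex
namespace SComplex

variable {V : Type u}

/-- The faces of the induced subcomplex `K[U]`; its cardinality (`Set.ncard`, counting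
the empty face) is the quantity `|K[U]|`. -/
def facesIn (K : SComplex V) (U : Set V) : Set (Finset V) :=
  {s | s ∈ K.faces ∧ ∀ v ∈ s, v ∈ U}

/-- For a vertex partition `V = U ⊔ W` (`W = Uᶜ`) and a face `σ` of `K[U]`, the
subcomplex `lk_W σ` of `K[W]`: the faces `τ ⊆ W` with `τ ⊔ σ ∈ K`. -/
def lkW (K : SComplex V) (U : Set V) (σ : Finset V) (hσ : σ ∈ K.faces) : SComplex V where
  faces := {τ | (∀ v ∈ τ, v ∉ U) ∧ τ ∪ σ ∈ K.faces}
  empty_mem := ⟨by simp, by simpa using hσ⟩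
  down_closed := by
    rintro s t ⟨hs1, hs2⟩ hts
    exact ⟨fun v hv => hs1 v (hts hv),
      K.down_closed hs2 (Finset.union_subset_union hts le_rfl)⟩

/-- For a vertex partition `V = U ⊔ W` and a face `σ` of `K[U]`, the subcomplex
`st_W σ = (lk_W σ) ∗ σ` of `K`: the faces `τ ∈ K` with `τ ∩ U ⊆ σ` and
`τ ∩ W ∈ lk_W σ`. -/
def stW (K : SComplex V) (U : Set V) (σ : Finset V) (hσ : σ ∈ K.faces) : SComplex V where
  faces := {τ | τ ∈ K.faces ∧ (∀ v ∈ τ, v ∈ U → v ∈ σ) ∧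
    (τ.filter (fun v => v ∉ U)) ∪ σ ∈ K.faces}
  empty_mem := ⟨K.empty_mem, by simp, by simpa using hσ⟩
  down_closed := by
    rintro s t ⟨hs1, hs2, hs3⟩ hts
    refine ⟨K.down_closed hs1 hts, fun v hv hvU => hs2 v (hts hv) hvU,
      K.down_closed hs3 ?_⟩
    exact Finset.union_subset_union (Finset.filter_subset_filter _ hts) le_rfl

end SComplex

/-!
Removing a vertex `u` splits `K` into the deletion `K ∖ u` and the closed star of `u`, which meet
in the link `lk u`. The star is a cone, hence acyclic, so the Mayer–Vietoris sequence gives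
`β̃ᵢ(K) ≤ β̃ᵢ(K ∖ u) + β̃ᵢ₋₁(lk u)`, and summing, `β̃(K) ≤ β̃(K ∖ u) + β̃(lk u)`.
For `u ∈ U` the faces of `K[U]` are those of `(K ∖ u)[U]` together with the cones `u * σ` over
the faces `σ` of `(lk u)[U]`, and the `W`-links in `K ∖ u` and in `lk u` are `W`-links in `K`.
Induction on the vertices of `K` in `U` therefore reduces the bound to the case where `K` has no
vertex in `U`, where `K = lk_W ∅`.
-/

lemma Fin.neg_one_pow_succAbove_mul_neg_one_pow_predAbove {R : Type*} [Ring R] {n : ℕ}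
    (i : Fin (n + 2)) (k : Fin (n + 1)) :
    (-1 : R) ^ (i.succAbove k : ℕ) * (-1) ^ (k.predAbove i : ℕ) =
      -((-1) ^ (i : ℕ) * (-1) ^ (k : ℕ)) := by
  have h : (i.succAbove k : ℕ) + (k.predAbove i : ℕ) + 1 = i + k ∨
      (i.succAbove k : ℕ) + (k.predAbove i : ℕ) = i + k + 1 := by
    simp only [Fin.succAbove, Fin.predAbove, Fin.lt_def, Fin.val_castSucc, apply_dite Fin.val,
      Fin.val_pred, Fin.coe_castPred, apply_ite Fin.val, Fin.val_succ]
    split_ifs <;> omega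
  rw [← pow_add, ← pow_add]
  rcases h with h | h
  · rw [← h, pow_succ, mul_neg_one, neg_neg]
  · rw [h, pow_succ, mul_neg_one]

lemma Module.finrank_le_finrank_add_finrank_of_ker_le_range {K M N P : Type*} [DivisionRing K]
    [AddCommGroup M] [Module K M] [AddCommGroup N] [Module K N] [AddCommGroup P] [Module K P]
    [FiniteDimensional K M] [FiniteDimensional K N] [FiniteDimensional K P]
    (β : M →ₗ[K] N) (α : N →ₗ[K] P) (h : LinearMap.ker α ≤ LinearMap.range β) :
    finrank K N ≤ finrank K M + finrank K P := by
  have hrank := LinearMap.finrank_range_add_finrank_ker α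
  have hker := (Submodule.finrank_mono h).trans (LinearMap.finrank_range_le β)
  have hrange := Submodule.finrank_le (LinearMap.range α)
  omega

open DirectSum in
lemma Module.finrank_directSum_eq_sum_range {K : Type*} [DivisionRing K] (M : ℕ → Type*)
    [∀ j, AddCommGroup (M j)] [∀ j, Module K (M j)] [∀ j, FiniteDimensional K (M j)] (N : ℕ)
    (hM : ∀ j, N ≤ j → Subsingleton (M j)) :
    finrank K (⨁ j, M j) = ∑ j ∈ range N, finrank K (M j) := by
  let f : (⨁ j, M j) →ₗ[K] ⨁ i : Fin N, M i :=
    toModule K ℕ _ fun j => if h : j < N then lof K (Fin N) (fun i => M i) ⟨j, h⟩ else 0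
  let g : (⨁ i : Fin N, M i) →ₗ[K] ⨁ j, M j := toModule K (Fin N) _ fun i => lof K ℕ M i
  have hfg : f ∘ₗ g = LinearMap.id := by
    refine linearMap_ext K fun i => LinearMap.ext fun x => ?_
    simp [f, g, toModule_lof, i.isLt]
  have hgf : g ∘ₗ f = LinearMap.id := by
    refine linearMap_ext K fun j => LinearMap.ext fun x => ?_
    by_cases h : j < N
    · simp [f, g, toModule_lof, h]
    · have := hM j (not_lt.1 h)
      simp [f, g, Subsingleton.elim x 0]
  rw [(LinearEquiv.ofLinearMap f g hfg hgf).finrank_eq, finrank_directSum,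
    ← Fin.sum_univ_eq_sum_range]

namespace SComplex

variable {V : Type u}

@[ext]
lemma ext {K₁ K₂ : SComplex V} (h : K₁.faces = K₂.faces) : K₁ = K₂ := by
  cases K₁; cases K₂; simpa using h

instance [Finite V] (K : SComplex V) (j : ℕ) : Finite (K.OSimplex j) := by
  unfold OSimplex; infer_instance

lemma image_comp_subset {α : Type*} {n m : ℕ} (t : Fin n → α) (f : Fin m → Fin n) :
    univ.image (t ∘ f) ⊆ univ.image t := by
  simp only [Finset.image_comp]
  exact Finset.image_subset_image (Finset.subset_univ _)

lemma image_cons {α : Type*} {n : ℕ} (a : α) (t : Fin n → α) :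
    univ.image (Fin.cons a t : Fin (n + 1) → α) = insert a (univ.image t) := by
  ext v
  simp [Fin.exists_fin_succ, eq_comm]

section boundary

variable (K : SComplex V) (j : ℕ)

def facet (s : K.OSimplex (j + 1)) (i : Fin (j + 1)) : K.OSimplex j :=
  ⟨s.1 ∘ i.succAbove, K.down_closed s.2 (image_comp_subset _ _)⟩

lemma bdryO_eq (s : K.OSimplex (j + 1)) :
    bdryO K j s = ∑ i, Finsupp.single (K.facet j s i) ((-1 : ℚ) ^ (i : ℕ)) := rfl

lemma bdry_single (s : K.OSimplex (j + 1)) (c : ℚ) :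
    bdry K j (Finsupp.single s c) = c • bdryO K j s := by
  simp [bdry, LinearMap.toSpanSingleton_apply]

end boundary

lemma bdry_bdryO (K : SComplex V) (j : ℕ) (s : K.OSimplex (j + 2)) :
    bdry K j (bdryO K (j + 1) s) = 0 := by
  simp only [bdryO_eq, map_sum, bdry_single, Finset.smul_sum, Finsupp.smul_single, smul_eq_mul,
    ← Fintype.sum_prod_type']
  -- the terms `(i, k)` and `(i.succAbove k, k.predAbove i)` are the same face with opposite signs
  refine Finset.sum_ninvolution (fun p => (p.1.succAbove p.2, p.2.predAbove p.1)) ?_ ?_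
    (fun _ => Finset.mem_univ _) ?_
  · rintro ⟨i, k⟩
    have hface : K.facet j (K.facet (j + 1) s (i.succAbove k)) (k.predAbove i) =
        K.facet j (K.facet (j + 1) s i) k :=
      Subtype.ext (funext fun x => congrArg s.1 (Fin.succAbove_succAbove_succAbove_predAbove i k x))
    rw [hface, ← Finsupp.single_add, Fin.neg_one_pow_succAbove_mul_neg_one_pow_predAbove,
      add_neg_cancel, Finsupp.single_zero]
  · rintro ⟨i, k⟩ - h
    exact Fin.succAbove_ne i k (congrArg Prod.fst h)
  · rintro ⟨i, k⟩
    exact Prod.ext (Fin.succAbove_succAbove_predAbove i k) (Fin.predAbove_predAbove_succAbove i k)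

lemma bdry_bdry (K : SComplex V) (j : ℕ) (x : K.Chain (j + 2)) :
    bdry K j (bdry K (j + 1) x) = 0 := by
  induction x using Finsupp.induction_linear with
  | zero => simp
  | add x y hx hy => simp [hx, hy]
  | single s c => rw [bdry_single, map_smul, bdry_bdryO, smul_zero]

lemma bdry_mem_cyclesAt (K : SComplex V) (j : ℕ) (x : K.Chain (j + 1)) :
    bdry K j x ∈ cyclesAt K j := by
  cases j with
  | zero => exact Submodule.mem_top
  | succ j => exact bdry_bdry K j x

section Subcomplex

variable {K₁ K₂ : SComplex V} (h : K₁.faces ⊆ K₂.faces) (j : ℕ)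

def inclS (t : K₁.OSimplex j) : K₂.OSimplex j := ⟨t.1, h t.2⟩

lemma inclS_injective : Function.Injective (inclS h j) :=
  fun _ _ hst => Subtype.ext (congrArg (fun t : K₂.OSimplex j => t.1) hst)

def incl : K₁.Chain j →ₗ[ℚ] K₂.Chain j := Finsupp.lmapDomain ℚ ℚ (inclS h j)

def restrict : K₂.Chain j →ₗ[ℚ] K₁.Chain j :=
  Finsupp.lcomapDomain (inclS h j) (inclS_injective h j)

lemma incl_apply (x : K₁.Chain j) (s : K₂.OSimplex j) :
    incl h j x s = if hs : univ.image s.1 ∈ K₁.faces then x ⟨s.1, hs⟩ else 0 := by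
  split_ifs with hs
  · exact Finsupp.mapDomain_apply (inclS_injective h j) x ⟨s.1, hs⟩
  · exact Finsupp.mapDomain_of_notMem_range _ _ (by rintro ⟨t, rfl⟩; exact hs t.2)

lemma incl_single (t : K₁.OSimplex j) (c : ℚ) :
    incl h j (Finsupp.single t c) = Finsupp.single (inclS h j t) c :=
  Finsupp.mapDomain_single

lemma incl_injective : Function.Injective (incl h j) :=
  Finsupp.mapDomain_injective (inclS_injective h j)

lemma restrict_incl (x : K₁.Chain j) : restrict h j (incl h j x) = x :=
  Finsupp.leftInverse_lcomapDomain_mapDomain _ _ x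

lemma incl_incl {K₃ : SComplex V} (h' : K₂.faces ⊆ K₃.faces) (x : K₁.Chain j) :
    incl h' j (incl h j x) = incl (h.trans h') j x :=
  (Finsupp.mapDomain_comp).symm

lemma mem_range_incl_iff {x : K₂.Chain j} :
    x ∈ LinearMap.range (incl h j) ↔ ∀ s : K₂.OSimplex j, univ.image s.1 ∉ K₁.faces → x s = 0 := by
  constructor
  · rintro ⟨y, rfl⟩ s hs
    rw [incl_apply, dif_neg hs]
  · refine fun hx => ⟨restrict h j x, Finsupp.ext fun s => ?_⟩
    rw [incl_apply]
    split_ifs with hs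
    · rfl
    · exact (hx s hs).symm

lemma incl_restrict_of_mem_range {x : K₂.Chain j} (hx : x ∈ LinearMap.range (incl h j)) :
    incl h j (restrict h j x) = x := by
  obtain ⟨y, rfl⟩ := hx
  rw [restrict_incl]

lemma incl_restrict_apply (x : K₂.Chain j) (s : K₂.OSimplex j) :
    incl h j (restrict h j x) s = if univ.image s.1 ∈ K₁.faces then x s else 0 := by
  rw [incl_apply]
  split_ifs <;> rfl

lemma bdry_incl (x : K₁.Chain (j + 1)) : bdry K₂ j (incl h (j + 1) x) = incl h j (bdry K₁ j x) := by
  induction x using Finsupp.induction_linear with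
  | zero => simp
  | add x y hx hy => simp only [map_add, hx, hy]
  | single s c =>
    simp only [incl_single, bdry_single, map_smul, bdryO_eq, map_sum]
    rfl

lemma incl_mem_cyclesAt_iff {x : K₁.Chain j} : incl h j x ∈ cyclesAt K₂ j ↔ x ∈ cyclesAt K₁ j := by
  cases j with
  | zero => exact iff_of_true Submodule.mem_top Submodule.mem_top
  | succ j =>
    simp only [cyclesAt, LinearMap.mem_ker, bdry_incl]
    exact (incl_injective h j).eq_iff' (map_zero _)

def inclHomology : homologyAt K₁ j →ₗ[ℚ] homologyAt K₂ j :=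
  Submodule.mapQ _ _
    ((incl h j).restrict fun x hx => (incl_mem_cyclesAt_iff h j).2 hx)
    (by rintro ⟨x, hx⟩ ⟨c, rfl⟩; exact ⟨incl h (j + 1) c, bdry_incl h j c⟩)

end Subcomplex

structure IsUnionInter (K A B C : SComplex V) : Prop where
  union : K.faces = A.faces ∪ B.faces
  inter : C.faces = A.faces ∩ B.faces

namespace IsUnionInter

variable {K A B C : SComplex V}

lemma left_subset (hK : IsUnionInter K A B C) : A.faces ⊆ K.faces :=
  hK.union ▸ Set.subset_union_left

lemma right_subset (hK : IsUnionInter K A B C) : B.faces ⊆ K.faces :=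
  hK.union ▸ Set.subset_union_right

lemma inter_subset_left (hK : IsUnionInter K A B C) : C.faces ⊆ A.faces :=
  hK.inter ▸ Set.inter_subset_left

lemma inter_subset_right (hK : IsUnionInter K A B C) : C.faces ⊆ B.faces :=
  hK.inter ▸ Set.inter_subset_right

lemma inter_subset (hK : IsUnionInter K A B C) : C.faces ⊆ K.faces :=
  hK.inter_subset_left.trans hK.left_subset

variable (hK : IsUnionInter K A B C) (j : ℕ)

lemma sub_incl_restrict_left_mem_range (x : K.Chain j) :
    x - incl hK.left_subset j (restrict hK.left_subset j x) ∈
      LinearMap.range (incl hK.right_subset j) := by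
  rw [mem_range_incl_iff]
  intro s hsB
  have hsA : univ.image s.1 ∈ A.faces :=
    (show univ.image s.1 ∈ A.faces ∪ B.faces from hK.union ▸ s.2).resolve_right hsB
  rw [Finsupp.sub_apply, incl_restrict_apply, if_pos hsA, sub_self]

lemma mem_range_incl_inter {x : K.Chain j} (hxA : x ∈ LinearMap.range (incl hK.left_subset j))
    (hxB : x ∈ LinearMap.range (incl hK.right_subset j)) :
    x ∈ LinearMap.range (incl hK.inter_subset j) := by
  rw [mem_range_incl_iff] at hxA hxB ⊢
  intro s hsC
  rw [hK.inter] at hsC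
  by_cases hsA : univ.image s.1 ∈ A.faces
  · exact hxB s fun hsB => hsC ⟨hsA, hsB⟩
  · exact hxA s hsA

lemma incl_restrict_left_mem_range_inter {x : K.Chain j}
    (hx : x ∈ LinearMap.range (incl hK.right_subset j)) :
    incl hK.left_subset j (restrict hK.left_subset j x) ∈
      LinearMap.range (incl hK.inter_subset j) := by
  refine hK.mem_range_incl_inter j (LinearMap.mem_range_self _ _) ?_
  rw [mem_range_incl_iff] at hx ⊢
  intro s hsB
  rw [incl_restrict_apply, hx s hsB, ite_self]

-- On a cycle `z`, the boundary of the `A`-part of `z` equals minus the boundary of its `B`-part,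
-- so it is carried by `A ∩ B = C`.
def connectingChain : K.Chain (j + 1) →ₗ[ℚ] C.Chain j :=
  restrict hK.inter_subset j ∘ₗ bdry K j ∘ₗ incl hK.left_subset (j + 1) ∘ₗ
    restrict hK.left_subset (j + 1)

lemma connectingChain_apply (z : K.Chain (j + 1)) :
    hK.connectingChain j z = restrict hK.inter_subset j
      (bdry K j (incl hK.left_subset (j + 1) (restrict hK.left_subset (j + 1) z))) := rfl

lemma incl_connectingChain {z : K.Chain (j + 1)} (hz : z ∈ cyclesAt K (j + 1)) :
    incl hK.inter_subset j (hK.connectingChain j z) =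
      bdry K j (incl hK.left_subset (j + 1) (restrict hK.left_subset (j + 1) z)) := by
  rw [connectingChain_apply]
  refine incl_restrict_of_mem_range _ _ (hK.mem_range_incl_inter j ?_ ?_)
  · rw [bdry_incl]
    exact LinearMap.mem_range_self _ _
  · obtain ⟨b, hb⟩ := hK.sub_incl_restrict_left_mem_range (j + 1) z
    have hz : bdry K j z = 0 := hz
    refine ⟨-bdry B j b, ?_⟩
    rw [map_neg, ← bdry_incl, hb, map_sub, hz, zero_sub, neg_neg]

lemma connectingChain_mem_cyclesAt {z : K.Chain (j + 1)} (hz : z ∈ cyclesAt K (j + 1)) :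
    hK.connectingChain j z ∈ cyclesAt C j := by
  rw [← incl_mem_cyclesAt_iff hK.inter_subset, hK.incl_connectingChain j hz]
  exact bdry_mem_cyclesAt K j _

lemma connectingChain_bdry (w : K.Chain (j + 2)) :
    hK.connectingChain j (bdry K (j + 1) w) ∈ boundariesAt C j := by
  obtain ⟨b, hb⟩ := hK.sub_incl_restrict_left_mem_range (j + 2) w
  obtain ⟨c, hc⟩ := hK.incl_restrict_left_mem_range_inter (j + 1)
    (x := bdry K (j + 1) (incl hK.right_subset (j + 2) b)) (by
      rw [bdry_incl]
      exact LinearMap.mem_range_self _ _)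
  have hsplit : bdry K (j + 1) w = incl hK.left_subset (j + 1)
      (bdry A (j + 1) (restrict hK.left_subset (j + 2) w)) +
        bdry K (j + 1) (incl hK.right_subset (j + 2) b) := by
    rw [hb, ← bdry_incl, ← map_add, add_sub_cancel]
  have hrestrict :
      incl hK.left_subset (j + 1) (restrict hK.left_subset (j + 1) (bdry K (j + 1) w)) =
      incl hK.left_subset (j + 1) (bdry A (j + 1) (restrict hK.left_subset (j + 2) w)) +
        incl hK.inter_subset (j + 1) c := by
    rw [hc, ← map_add, hsplit, map_add, restrict_incl]
  refine ⟨c, ?_⟩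
  rw [connectingChain_apply, hrestrict, map_add, bdry_incl, bdry_incl, bdry_bdry, map_zero,
    zero_add, restrict_incl]

def connecting : homologyAt K (j + 1) →ₗ[ℚ] homologyAt C j :=
  Submodule.mapQ _ _
    ((hK.connectingChain j ∘ₗ (cyclesAt K (j + 1)).subtype).codRestrict _
      fun z => hK.connectingChain_mem_cyclesAt j z.2)
    (by rintro ⟨x, hx⟩ ⟨w, rfl⟩; exact hK.connectingChain_bdry j w)

lemma exists_incl_eq_sub_bdry (hB : cyclesAt B (j + 1) ≤ boundariesAt B (j + 1))
    {z : K.Chain (j + 1)} (hz : z ∈ cyclesAt K (j + 1)) {w : C.Chain (j + 1)}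
    (hw : bdry C j w = hK.connectingChain j z) :
    ∃ (a : A.Chain (j + 1)) (c : K.Chain (j + 2)),
      incl hK.left_subset (j + 1) a = z - bdry K (j + 1) c := by
  obtain ⟨b, hb⟩ := hK.sub_incl_restrict_left_mem_range (j + 1) z
  have hcycle : b + incl hK.inter_subset_right (j + 1) w ∈ cyclesAt B (j + 1) := by
    refine (incl_injective hK.right_subset j).eq_iff' (map_zero _) |>.1 ?_
    have hz' : bdry K j z = 0 := hz
    rw [← bdry_incl, map_add, incl_incl, hb, map_add, bdry_incl, hw, hK.incl_connectingChain j hz,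
      map_sub, hz', zero_sub, neg_add_cancel]
  obtain ⟨c, hc⟩ := hB hcycle
  refine ⟨restrict hK.left_subset (j + 1) z - incl hK.inter_subset_left (j + 1) w,
    incl hK.right_subset (j + 2) c, ?_⟩
  rw [bdry_incl, hc, map_add, incl_incl, hb, map_sub, incl_incl]
  abel

lemma ker_connecting_le_range (hB : cyclesAt B (j + 1) ≤ boundariesAt B (j + 1)) :
    LinearMap.ker (hK.connecting j) ≤ LinearMap.range (inclHomology hK.left_subset (j + 1)) := by
  rintro x hx
  obtain ⟨⟨z, hz⟩, rfl⟩ := Submodule.Quotient.mk_surjective _ x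
  obtain ⟨w, hw⟩ : hK.connectingChain j z ∈ boundariesAt C j := by
    simpa [connecting, Submodule.Quotient.mk_eq_zero] using hx
  obtain ⟨a, c, hac⟩ := hK.exists_incl_eq_sub_bdry j hB hz hw
  have ha : a ∈ cyclesAt A (j + 1) := by
    rw [← incl_mem_cyclesAt_iff hK.left_subset, hac]
    exact sub_mem hz (bdry_mem_cyclesAt K (j + 1) c)
  refine ⟨Submodule.Quotient.mk ⟨a, ha⟩, (Submodule.Quotient.eq _).2 ⟨-c, ?_⟩⟩
  show bdry K (j + 1) (-c) = incl hK.left_subset (j + 1) a - z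
  rw [hac, map_neg]
  abel

lemma bettiAt_succ_le [Finite V] (hK : IsUnionInter K A B C)
    (hB : cyclesAt B (j + 1) ≤ boundariesAt B (j + 1)) :
    bettiAt K (j + 1) ≤ bettiAt A (j + 1) + bettiAt C j :=
  Module.finrank_le_finrank_add_finrank_of_ker_le_range _ _ (hK.ker_connecting_le_range j hB)

end IsUnionInter

section Cone

variable (K : SComplex V) {u : V} (hu : ∀ τ ∈ K.faces, insert u τ ∈ K.faces) (j : ℕ)

def coneS (s : K.OSimplex j) : K.OSimplex (j + 1) :=
  ⟨Fin.cons u s.1, by rw [image_cons u]; exact hu _ s.2⟩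

def cone : K.Chain j →ₗ[ℚ] K.Chain (j + 1) := Finsupp.lmapDomain ℚ ℚ (K.coneS hu j)

lemma cone_single (s : K.OSimplex j) (c : ℚ) :
    K.cone hu j (Finsupp.single s c) = Finsupp.single (K.coneS hu j s) c :=
  Finsupp.mapDomain_single

lemma facet_coneS_zero (s : K.OSimplex j) : K.facet j (K.coneS hu j s) 0 = s :=
  Subtype.ext (funext fun x => by simp [facet, coneS])

lemma facet_coneS_succ (s : K.OSimplex (j + 1)) (k : Fin (j + 1)) :
    K.facet (j + 1) (K.coneS hu (j + 1) s) k.succ = K.coneS hu j (K.facet j s k) := by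
  refine Subtype.ext (funext fun x => Fin.cases ?_ (fun y => ?_) x)
  · simp [facet, coneS]
  · simp only [facet, coneS, Function.comp_apply, Fin.succ_succAbove_succ, Fin.cons_succ]

lemma bdryO_coneS (s : K.OSimplex (j + 1)) :
    bdryO K (j + 1) (K.coneS hu (j + 1) s) = Finsupp.single s 1 - K.cone hu j (bdryO K j s) := by
  rw [bdryO_eq, Fin.sum_univ_succ, facet_coneS_zero, bdryO_eq, map_sum, sub_eq_add_neg,
    ← Finset.sum_neg_distrib]
  congr 1
  refine Finset.sum_congr rfl fun k _ => ?_
  rw [cone_single, facet_coneS_succ,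
    ← Finsupp.single_neg, Fin.val_succ, pow_succ, mul_neg_one]

lemma bdry_cone (x : K.Chain (j + 1)) :
    bdry K (j + 1) (K.cone hu (j + 1) x) = x - K.cone hu j (bdry K j x) := by
  induction x using Finsupp.induction_linear with
  | zero => simp
  | add x y hx hy => simp only [map_add, hx, hy]; abel
  | single s c =>
    rw [cone_single, bdry_single, bdry_single, bdryO_coneS, smul_sub, Finsupp.smul_single,
      smul_eq_mul, mul_one, map_smul]

lemma cyclesAt_le_boundariesAt_of_cone (hu : ∀ τ ∈ K.faces, insert u τ ∈ K.faces) :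
    cyclesAt K (j + 1) ≤ boundariesAt K (j + 1) := by
  intro x hx
  refine ⟨K.cone hu (j + 1) x, ?_⟩
  have hx : bdry K j x = 0 := hx
  rw [bdry_cone, hx, map_zero, sub_zero]

end Cone

def vertices (K : SComplex V) : Set V := {v | {v} ∈ K.faces}

instance (K : SComplex V) : Subsingleton (K.OSimplex 0) :=
  ⟨fun _ _ => Subtype.ext (funext fun i => i.elim0)⟩

lemma bdry_zero_surjective {K : SComplex V} {u : V} (hu : u ∈ K.vertices) :
    Function.Surjective (bdry K 0) := by
  intro x
  let v : K.OSimplex 1 := ⟨fun _ => u, by simpa [vertices] using hu⟩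
  refine ⟨Finsupp.single v (x (K.facet 0 v 0)), Finsupp.ext fun a => ?_⟩
  rw [Subsingleton.elim a (K.facet 0 v 0), bdry_single, bdryO_eq, Fin.sum_univ_one]
  simp

lemma bettiAt_zero_eq_zero {K : SComplex V} {u : V} (hu : u ∈ K.vertices) : bettiAt K 0 = 0 := by
  have : Subsingleton (homologyAt K 0) := by
    rw [Submodule.Quotient.subsingleton_iff, boundariesAt, LinearMap.range_eq_top.2
      (bdry_zero_surjective hu), Submodule.comap_top]
  exact Module.finrank_zero_of_subsingleton

lemma bettiAt_succ_eq_zero_of_vertices_eq_empty {K : SComplex V} (hK : K.vertices = ∅) (j : ℕ) :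
    bettiAt K (j + 1) = 0 := by
  have : IsEmpty (K.OSimplex (j + 1)) := ⟨fun t => (Set.eq_empty_iff_forall_notMem.1 hK) (t.1 0)
    (K.down_closed t.2 (singleton_subset_iff.2 (mem_image_of_mem _ (mem_univ 0))))⟩
  exact Module.finrank_zero_of_subsingleton

section Vertex

variable (K : SComplex V) {u : V}

def deletion (u : V) : SComplex V where
  faces := {τ | τ ∈ K.faces ∧ u ∉ τ}
  empty_mem := ⟨K.empty_mem, Finset.notMem_empty u⟩
  down_closed := fun hs hts => ⟨K.down_closed hs.1 hts, fun hu => hs.2 (hts hu)⟩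

def star (hu : u ∈ K.vertices) : SComplex V where
  faces := {τ | insert u τ ∈ K.faces}
  empty_mem := by simpa [vertices] using hu
  down_closed := fun hs hts => K.down_closed hs (Finset.insert_subset_insert u hts)

def link (hu : u ∈ K.vertices) : SComplex V where
  faces := {τ | u ∉ τ ∧ insert u τ ∈ K.faces}
  empty_mem := ⟨Finset.notMem_empty u, by simpa [vertices] using hu⟩
  down_closed := fun hs hts =>
    ⟨fun h => hs.1 (hts h), K.down_closed hs.2 (Finset.insert_subset_insert u hts)⟩

variable {K} (hu : u ∈ K.vertices)

lemma isUnionInter_deletion_star_link :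
    IsUnionInter K (K.deletion u) (K.star hu) (K.link hu) where
  union := Set.ext fun τ =>
    ⟨fun hτ => (em (u ∈ τ)).elim
      (fun h => Or.inr (show insert u τ ∈ K.faces by rwa [Finset.insert_eq_of_mem h]))
      (fun h => Or.inl ⟨hτ, h⟩),
    fun h => h.elim And.left fun h => K.down_closed h (Finset.subset_insert u τ)⟩
  inter := Set.ext fun τ =>
    ⟨fun h => ⟨⟨K.down_closed h.2 (Finset.subset_insert u τ), h.1⟩, h.2⟩, fun h => ⟨h.1.2, h.2⟩⟩

lemma insert_mem_star {τ : Finset V} (hτ : τ ∈ (K.star hu).faces) :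
    insert u τ ∈ (K.star hu).faces := by
  simpa [star] using hτ

lemma bettiAt_succ_le_deletion_add_link [Finite V] (j : ℕ) :
    bettiAt K (j + 1) ≤ bettiAt (K.deletion u) (j + 1) + bettiAt (K.link hu) j :=
  (isUnionInter_deletion_star_link hu).bettiAt_succ_le j
    (cyclesAt_le_boundariesAt_of_cone _ j fun _ => insert_mem_star hu)

lemma vertices_deletion : (K.deletion u).vertices = K.vertices \ {u} := by
  ext v
  simp [vertices, deletion, eq_comm]

lemma vertices_link_subset : (K.link hu).vertices ⊆ K.vertices \ {u} := by
  rintro v ⟨hvu, hv⟩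
  exact ⟨K.down_closed hv (Finset.subset_insert u {v}),
    fun h => hvu (Finset.mem_singleton.2 h.symm)⟩

end Vertex

section Finite

variable [Finite V]

-- Ordered simplices may repeat vertices, so chains exist in every degree and the vanishing of
-- high-degree homology (needed for `totalBetti` to be a finite sum) is itself proved by
-- Mayer–Vietoris induction.
lemma bettiAt_eq_zero_of_vertices_subset (s : Finset V) :
    ∀ K : SComplex V, K.vertices ⊆ s → ∀ j, s.card < j → bettiAt K j = 0 := by
  induction s using Finset.induction_on with
  | empty =>
    rintro K hK (_ | j) hj
    · exact absurd hj (Nat.lt_irrefl 0)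
    · exact bettiAt_succ_eq_zero_of_vertices_eq_empty (Set.subset_empty_iff.1 (by simpa using hK)) j
  | insert a s ha ih =>
    intro K hK j hj
    rw [Finset.card_insert_of_notMem ha] at hj
    by_cases hu : a ∈ K.vertices
    · obtain ⟨m, rfl⟩ : ∃ m, j = m + 1 := ⟨j - 1, by omega⟩
      have hsub : K.vertices \ {a} ⊆ s := Set.sdiff_singleton_subset_iff.2 (by simpa using hK)
      have hdel := ih (K.deletion a) (vertices_deletion ▸ hsub) (m + 1) (by omega)
      have hlink := ih (K.link hu) ((vertices_link_subset hu).trans hsub) m (by omega)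
      have := bettiAt_succ_le_deletion_add_link hu m
      omega
    · exact ih K (fun v hv => (Finset.coe_insert a s ▸ hK hv).resolve_left fun h => hu (h ▸ hv))
        j (by omega)

lemma totalBetti_eq_sum_range (K : SComplex V) {N : ℕ} (hN : Nat.card V < N) :
    totalBetti K = ∑ j ∈ range N, bettiAt K j := by
  have := Fintype.ofFinite V
  refine Module.finrank_directSum_eq_sum_range (homologyAt K) N fun j hj =>
    Module.finrank_zero_iff (R := ℚ).1 ?_
  refine bettiAt_eq_zero_of_vertices_subset univ K (by simp) j ?_
  rw [Finset.card_univ, ← Nat.card_eq_fintype_card]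
  omega

lemma totalBetti_le_deletion_add_link {K : SComplex V} {u : V} (hu : u ∈ K.vertices) :
    totalBetti K ≤ totalBetti (K.deletion u) + totalBetti (K.link hu) := by
  obtain ⟨N, hN⟩ : ∃ N, Nat.card V < N := ⟨_, Nat.lt_add_one _⟩
  rw [totalBetti_eq_sum_range K (hN.trans N.lt_add_one),
    totalBetti_eq_sum_range (K.deletion u) (hN.trans N.lt_add_one),
    totalBetti_eq_sum_range (K.link hu) hN, sum_range_succ' _ N, sum_range_succ' _ N,
    bettiAt_zero_eq_zero hu, add_zero]
  calc ∑ m ∈ range N, bettiAt K (m + 1)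
      ≤ ∑ m ∈ range N, (bettiAt (K.deletion u) (m + 1) + bettiAt (K.link hu) m) :=
        sum_le_sum fun m _ => bettiAt_succ_le_deletion_add_link hu m
    _ ≤ _ := by rw [sum_add_distrib]; omega

end Finite

section InducedLink

variable {K : SComplex V} {U : Set V} {u : V}

lemma lkW_deletion (huU : u ∈ U) {σ : Finset V} (hσ : σ ∈ (K.deletion u).faces) :
    lkW (K.deletion u) U σ hσ = lkW K U σ hσ.1 := by
  ext τ
  refine ⟨fun h => ⟨h.1, h.2.1⟩, fun h => ⟨h.1, h.2, fun hu => ?_⟩⟩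
  rcases Finset.mem_union.1 hu with hu | hu
  · exact h.1 u hu huU
  · exact hσ.2 hu

lemma lkW_link (hu : u ∈ K.vertices) (huU : u ∈ U) {σ : Finset V} (hσ : σ ∈ (K.link hu).faces) :
    lkW (K.link hu) U σ hσ = lkW K U (insert u σ) hσ.2 := by
  ext τ
  simp only [lkW, link, Set.mem_ofPred_eq, Finset.union_insert, Finset.mem_union, not_or]
  exact ⟨fun h => ⟨h.1, h.2.2⟩, fun h => ⟨h.1, ⟨fun hu => h.1 u hu huU, hσ.1⟩, h.2⟩⟩

lemma lkW_empty_of_disjoint (hK : Disjoint K.vertices U) : lkW K U ∅ K.empty_mem = K := by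
  ext τ
  simp only [lkW, Finset.union_empty, Set.mem_ofPred_eq, and_iff_right_iff_imp]
  exact fun hτ v hv hvU => Set.disjoint_left.1 hK (K.down_closed hτ (singleton_subset_iff.2 hv)) hvU

lemma facesIn_deletion : facesIn (K.deletion u) U = {σ ∈ facesIn K U | u ∉ σ} := by
  ext σ
  exact ⟨fun h => ⟨⟨h.1.1, h.2⟩, h.1.2⟩, fun h => ⟨⟨h.1.1, h.2⟩, h.1.2⟩⟩

lemma image_insert_facesIn_link (hu : u ∈ K.vertices) (huU : u ∈ U) :
    insert u '' facesIn (K.link hu) U = {σ ∈ facesIn K U | u ∈ σ} := by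
  ext σ
  constructor
  · rintro ⟨τ, ⟨⟨-, hτ⟩, hτU⟩, rfl⟩
    refine ⟨⟨hτ, fun v hv => ?_⟩, Finset.mem_insert_self u τ⟩
    rcases Finset.mem_insert.1 hv with rfl | hv
    exacts [huU, hτU v hv]
  · rintro ⟨⟨hσ, hσU⟩, huσ⟩
    refine ⟨σ.erase u, ⟨⟨Finset.notMem_erase u σ, ?_⟩,
      fun v hv => hσU v (Finset.mem_of_mem_erase hv)⟩, Finset.insert_erase huσ⟩
    rwa [Finset.insert_erase huσ]

lemma ncard_facesIn_eq_add [Finite V] (hu : u ∈ K.vertices) (huU : u ∈ U) :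
    (facesIn K U).ncard = (facesIn (K.deletion u) U).ncard + (facesIn (K.link hu) U).ncard := by
  have hinj : Set.InjOn (insert u) (facesIn (K.link hu) U) := fun τ₁ h₁ τ₂ h₂ h => by
    rw [← Finset.erase_insert h₁.1.1, ← Finset.erase_insert h₂.1.1, h]
  rw [facesIn_deletion, ← hinj.ncard_image, image_insert_facesIn_link hu huU,
    ← Set.ncard_union_eq (Set.disjoint_left.2 fun σ h₁ h₂ => h₁.2 h₂.2), ← Set.sep_or]
  simp only [em', Set.sep_true]

end InducedLink

theorem totalBetti_le_mul_ncard_facesIn [Finite V] (U : Set V) (B : ℕ) (s : Finset V) :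
    ∀ K : SComplex V, K.vertices ∩ U ⊆ s →
      (∀ σ (hσ : σ ∈ K.faces), (∀ v ∈ σ, v ∈ U) → totalBetti (lkW K U σ hσ) ≤ B) →
      totalBetti K ≤ B * (facesIn K U).ncard := by
  induction s using Finset.induction_on with
  | empty =>
    intro K hK hB
    have hdisj : Disjoint K.vertices U := Set.disjoint_iff_inter_eq_empty.2 (by simpa using hK)
    have hpos : 0 < (facesIn K U).ncard :=
      (Set.ncard_pos (Set.toFinite _)).2 ⟨∅, K.empty_mem, by simp⟩
    calc totalBetti K ≤ B := lkW_empty_of_disjoint hdisj ▸ hB ∅ K.empty_mem (by simp)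
      _ ≤ B * (facesIn K U).ncard := Nat.le_mul_of_pos_right B hpos
  | insert a s ha ih =>
    intro K hK hB
    by_cases hau : a ∈ K.vertices ∧ a ∈ U
    · obtain ⟨hu, huU⟩ := hau
      have hsub : (K.vertices \ {a}) ∩ U ⊆ s := by
        rintro v ⟨⟨hv, hva⟩, hvU⟩
        exact (Finset.coe_insert a s ▸ hK ⟨hv, hvU⟩).resolve_left hva
      have hdel := ih (K.deletion a) (vertices_deletion ▸ hsub) fun σ hσ hσU =>
        lkW_deletion huU hσ ▸ hB σ hσ.1 hσU
      have hlink := ih (K.link hu)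
        ((Set.inter_subset_inter_left U (vertices_link_subset hu)).trans hsub)
        fun σ hσ hσU => lkW_link hu huU hσ ▸ hB (insert a σ) hσ.2 fun v hv =>
          (Finset.mem_insert.1 hv).elim (fun h => h ▸ huU) (hσU v)
      rw [ncard_facesIn_eq_add hu huU, mul_add]
      exact (totalBetti_le_deletion_add_link hu).trans (add_le_add hdel hlink)
    · exact ih K (fun v hv => (Finset.coe_insert a s ▸ hK hv).resolve_left fun h => hau (h ▸ hv)) hB

end SComplex

/-- Let `K` be a finite simplicial complex with a partition
`V(K) = U ⊔ W` of its vertex set (`W = Uᶜ`), and suppose that for every face `σ` of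
`K[U]` (including the empty face) one has `β̃(lk_W σ) ≤ B`.  Then
`β̃(K) ≤ B · |K[U]|`, where `|K[U]|` counts the faces of `K[U]` including the empty
one. -/
theorem statement13 {V : Type} [Fintype V] (K : SComplex V) (U : Set V) (B : ℕ)
    (h : ∀ σ : Finset V, (hσ : σ ∈ K.faces) → (∀ v ∈ σ, v ∈ U) →
      SComplex.totalBetti (SComplex.lkW K U σ hσ) ≤ B) :
    SComplex.totalBetti K ≤ B * (SComplex.facesIn K U).ncard :=
  SComplex.totalBetti_le_mul_ncard_facesIn U B Finset.univ K (by simp) h
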